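/- Fix an integer k ≥ 2 and let S denote the set of k-free positive integers. Define η(q,a) = ∑_{d ≥ 1, (q,d^k) | a} μ(d)/[q, d^k]. Then for every ε > 0, uniformly for 1 ≤ q ≤ x: ∑_{n ≤ x, n ∈ S} η(q, n) = x ∑_{a=1}^q η(q,a)² + O_{k,ε}( x^{1/k+ε} ). -/

import Mathlib

open ArithmeticFunction
open scoped Classical

/-- `η(q,a) = ∑_{d ≥ 1, (q,d^k) | a} μ(d)/[q, d^k]`. -/
noncomputable def eta (k q a : ℕ) : ℝ :=
  ∑' d : ℕ+, if Nat.gcd q ((d : ℕ) ^ k) ∣ a then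
    (moebius (d : ℕ) : ℝ) / (Nat.lcm q ((d : ℕ) ^ k) : ℝ) else 0

/-!
Write `η(q,a) = ∑_d c_d [(q,d^k) ∣ a]` with `c_d = μ(d)/[q,d^k]`, so that `|c_d| ≤ d^{-k}`.
Exchanging the sums, the left side becomes `∑_d c_d N_d(x)`, where `N_d(x)` counts the `k`-free
multiples of `(q,d^k)` up to `x`, and the main term becomes `x ∑_d c_d δ((q,d^k))`, where
`δ(m) = ∑_e μ(e)/[m,e^k]`; the latter rests on `q [g,A] = [q,A] [g,(q,A)]` for `g ∣ q`.
Writing the indicator of `k`-free `n` as `∑_{e^k ∣ n} μ(e)` turns the count of `k`-free multiples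
of `m` up to `x` into `∑_e μ(e) ⌊x/[m,e^k]⌋`, which differs from `x δ(m)` by at most
`∑_e min(1, x/e^k) = O(x^{1/k})`, uniformly in `m`.
-/

open Finset
open scoped ArithmeticFunction.Moebius

lemma Nat.floorRoot_eq_one_iff {k n : ℕ} :
    Nat.floorRoot k n = 1 ↔ ∀ p : ℕ, p.Prime → ¬ p ^ k ∣ n := by
  refine ⟨fun h p hp hpn => hp.ne_one ?_, fun h => ?_⟩
  · rw [Nat.pow_dvd_iff_dvd_floorRoot, h] at hpn
    exact Nat.dvd_one.1 hpn
  · by_contra hne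
    obtain ⟨p, hp, hpr⟩ := Nat.exists_prime_and_dvd hne
    exact h p hp (Nat.pow_dvd_iff_dvd_floorRoot.2 hpr)

lemma sum_divisors_moebius (n : ℕ) :
    ∑ d ∈ n.divisors, (μ d : ℝ) = if n = 1 then 1 else 0 := by
  have h := congrArg (· n) (coe_moebius_mul_coe_zeta (R := ℝ))
  simp only [coe_mul_zeta_apply, one_apply, intCoe_apply] at h
  exact h

lemma sum_moebius_pow_dvd {k n N : ℕ} (hk : k ≠ 0) (hn : 0 < n) (hnN : n ≤ N) :
    ∑ e ∈ Icc 1 N with e ^ k ∣ n, (μ e : ℝ) = if ∀ p : ℕ, p.Prime → ¬ p ^ k ∣ n then 1 else 0 := by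
  have hr : Nat.floorRoot k n ≠ 0 := Nat.floorRoot_ne_zero.2 ⟨hk, hn.ne'⟩
  have hrn : Nat.floorRoot k n ≤ n :=
    (Nat.le_self_pow hk _).trans (Nat.le_of_dvd hn Nat.floorRoot_pow_dvd)
  have hset : {e ∈ Icc 1 N | e ^ k ∣ n} = (Nat.floorRoot k n).divisors := by
    ext e
    simp only [mem_filter, mem_Icc, Nat.mem_divisors, Nat.pow_dvd_iff_dvd_floorRoot]
    refine ⟨fun h => ⟨h.2, hr⟩, fun h => ⟨⟨Nat.pos_of_dvd_of_pos h.1 hr.bot_lt, ?_⟩, h.1⟩⟩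
    exact (Nat.le_of_dvd hr.bot_lt h.1).trans (hrn.trans hnN)
  rw [hset, sum_divisors_moebius]
  exact if_congr Nat.floorRoot_eq_one_iff rfl rfl

lemma card_filter_dvd_and_dvd (a b N : ℕ) : #{n ∈ Icc 1 N | a ∣ n ∧ b ∣ n} = N / a.lcm b := by
  simp_rw [← Nat.lcm_dvd_iff]
  exact Nat.Ioc_filter_dvd_card_eq_div N _

lemma card_kFree_multiples {k : ℕ} (hk : k ≠ 0) (m N : ℕ) :
    (#{n ∈ Icc 1 N | m ∣ n ∧ ∀ p : ℕ, p.Prime → ¬ p ^ k ∣ n} : ℝ)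
      = ∑ e ∈ Icc 1 N, (μ e : ℝ) * (N / m.lcm (e ^ k) : ℕ) := by
  calc (#{n ∈ Icc 1 N | m ∣ n ∧ ∀ p : ℕ, p.Prime → ¬ p ^ k ∣ n} : ℝ)
      = ∑ n ∈ Icc 1 N, if m ∣ n then ∑ e ∈ Icc 1 N with e ^ k ∣ n, (μ e : ℝ) else 0 := by
        rw [card_eq_sum_ones, Nat.cast_sum, sum_filter]
        refine sum_congr rfl fun n hn => ?_
        rw [mem_Icc] at hn
        rw [sum_moebius_pow_dvd hk hn.1 hn.2]
        split_ifs <;> simp_all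
    _ = ∑ e ∈ Icc 1 N, ∑ n ∈ Icc 1 N, if m ∣ n ∧ e ^ k ∣ n then (μ e : ℝ) else 0 := by
        rw [sum_comm]
        refine sum_congr rfl fun n _ => ?_
        rw [sum_filter]
        split_ifs with h <;> simp [h]
    _ = ∑ e ∈ Icc 1 N, (μ e : ℝ) * (N / m.lcm (e ^ k) : ℕ) := by
        refine sum_congr rfl fun e _ => ?_
        rw [← sum_filter, sum_const, card_filter_dvd_and_dvd, nsmul_eq_mul, mul_comm]

lemma div_natCast_le_div_natCast_of_dvd {a b : ℕ} (h : a ∣ b) {x : ℝ} (hx : 0 ≤ x) :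
    x / b ≤ x / a := by
  rcases eq_or_ne b 0 with rfl | hb
  · simp only [Nat.cast_zero, div_zero]
    positivity
  have ha : (0 : ℝ) < a := by exact_mod_cast Nat.pos_of_dvd_of_pos h (Nat.pos_of_ne_zero hb)
  exact div_le_div_of_nonneg_left hx ha (by exact_mod_cast Nat.le_of_dvd (Nat.pos_of_ne_zero hb) h)

lemma tsum_inv_pow_le_two {k : ℕ} (hk : 2 ≤ k) : ∑' e : ℕ, ((e : ℝ) ^ k)⁻¹ ≤ 2 := by
  have hle : ∀ e : ℕ, ((e : ℝ) ^ k)⁻¹ ≤ 1 / (e : ℝ) ^ 2 := by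
    intro e
    rcases Nat.eq_zero_or_pos e with rfl | he
    · simp [zero_pow (by omega : k ≠ 0)]
    · rw [one_div]
      exact inv_anti₀ (by positivity) (pow_le_pow_right₀ (by exact_mod_cast he) hk)
  calc ∑' e : ℕ, ((e : ℝ) ^ k)⁻¹ ≤ Real.pi ^ 2 / 6 :=
        hasSum_le hle (Real.summable_nat_pow_inv.2 (by omega)).hasSum hasSum_zeta_two
    _ ≤ 2 := by nlinarith [Real.pi_lt_d2, Real.pi_pos]

section MoebiusSeries

variable {k : ℕ} {L : ℕ → ℕ}

lemma abs_moebius_div_le (hL : ∀ e, e ^ k ∣ L e) (e : ℕ) :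
    |(μ e : ℝ) / L e| ≤ ((e : ℝ) ^ k)⁻¹ := by
  have hμ : |(μ e : ℝ)| ≤ 1 := by exact_mod_cast abs_moebius_le_one
  rw [abs_div, Nat.abs_cast, ← one_div]
  calc |(μ e : ℝ)| / L e ≤ 1 / L e := by gcongr
    _ ≤ 1 / ((e ^ k : ℕ) : ℝ) := div_natCast_le_div_natCast_of_dvd (hL e) zero_le_one
    _ = 1 / (e : ℝ) ^ k := by push_cast; rfl

variable {a : ℕ → ℝ} {B : ℝ}

lemma norm_moebius_div_mul_le (hL : ∀ e, e ^ k ∣ L e) (ha : ∀ e, |a e| ≤ B) (e : ℕ) :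
    ‖(μ e : ℝ) / L e * a e‖ ≤ ((e : ℝ) ^ k)⁻¹ * B := by
  rw [Real.norm_eq_abs, abs_mul]
  exact mul_le_mul (abs_moebius_div_le hL e) (ha e) (abs_nonneg _) (by positivity)

lemma summable_moebius_div_mul (hk : 2 ≤ k) (hL : ∀ e, e ^ k ∣ L e) (ha : ∀ e, |a e| ≤ B) :
    Summable fun e => (μ e : ℝ) / L e * a e :=
  .of_norm_bounded ((Real.summable_nat_pow_inv.2 (by omega)).mul_right B)
    (norm_moebius_div_mul_le hL ha)

lemma abs_tsum_moebius_div_mul_le (hk : 2 ≤ k) (hL : ∀ e, e ^ k ∣ L e) (ha : ∀ e, |a e| ≤ B) :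
    |∑' e, (μ e : ℝ) / L e * a e| ≤ 2 * B := by
  have hB : 0 ≤ B := (abs_nonneg _).trans (ha 0)
  calc |∑' e, (μ e : ℝ) / L e * a e| ≤ (∑' e : ℕ, ((e : ℝ) ^ k)⁻¹) * B :=
        tsum_of_norm_bounded ((Real.summable_nat_pow_inv.2 (by omega)).hasSum.mul_right B)
          (norm_moebius_div_mul_le hL ha)
    _ ≤ 2 * B := mul_le_mul_of_nonneg_right (tsum_inv_pow_le_two hk) hB

lemma summable_moebius_div (hk : 2 ≤ k) (hL : ∀ e, e ^ k ∣ L e) :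
    Summable fun e => (μ e : ℝ) / L e := by
  simpa using summable_moebius_div_mul hk hL (a := fun _ => 1) (B := 1) (by simp)

lemma abs_tsum_moebius_div_le (hk : 2 ≤ k) (hL : ∀ e, e ^ k ∣ L e) :
    |∑' e, (μ e : ℝ) / L e| ≤ 2 := by
  simpa using abs_tsum_moebius_div_mul_le hk hL (a := fun _ => 1) (B := 1) (by simp)

end MoebiusSeries

lemma abs_natFloor_sub_le_min {t : ℝ} (ht : 0 ≤ t) : |(⌊t⌋₊ : ℝ) - t| ≤ min 1 t := by
  rw [abs_sub_comm, abs_of_nonneg (sub_nonneg.2 (Nat.floor_le ht))]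
  exact le_min (by linarith [Nat.lt_floor_add_one t]) (by simp)

lemma sum_range_min_one_div_sq_le {Y : ℝ} (hY : 1 ≤ Y) (n : ℕ) :
    ∑ e ∈ range n, min 1 ((Y / e) ^ 2) ≤ 4 * Y := by
  set E := ⌊Y⌋₊
  have hE : Y < E + 1 := Nat.lt_floor_add_one Y
  have hEY : (E : ℝ) ≤ Y := Nat.floor_le (by linarith)
  calc ∑ e ∈ range n, min 1 ((Y / e) ^ 2)
      ≤ ∑ e ∈ range (E + 1) ∪ Ioo E n, min 1 ((Y / e) ^ 2) :=
        sum_le_sum_of_subset_of_nonneg (fun e he => by simp at he ⊢; omega)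
          (fun _ _ _ => by positivity)
    _ = ∑ e ∈ range (E + 1), min 1 ((Y / e) ^ 2) + ∑ e ∈ Ioo E n, min 1 ((Y / e) ^ 2) :=
        sum_union (disjoint_left.2 fun e he he' => by simp at he he'; omega)
    _ ≤ ∑ e ∈ range (E + 1), 1 + ∑ e ∈ Ioo E n, Y ^ 2 * ((e : ℝ) ^ 2)⁻¹ := by
        gcongr with e he e he
        · exact min_le_left _ _
        · exact (min_le_right _ _).trans_eq (by rw [div_pow, div_eq_mul_inv])
    _ ≤ (E + 1) + Y ^ 2 * (2 / (E + 1)) := by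
        rw [← mul_sum]
        gcongr
        · simp
        · exact sum_Ioo_inv_sq_le E n
    _ ≤ 4 * Y := by
        have : Y ^ 2 * (2 / (E + 1)) ≤ 2 * Y := by
          rw [mul_div_assoc', div_le_iff₀ (by positivity)]
          nlinarith
        linarith

lemma summable_min_one_div_sq {Y : ℝ} (hY : 1 ≤ Y) : Summable fun e : ℕ => min 1 ((Y / e) ^ 2) :=
  summable_of_sum_range_le (fun _ => by positivity) (sum_range_min_one_div_sq_le hY)

lemma tsum_min_one_div_sq_le {Y : ℝ} (hY : 1 ≤ Y) : ∑' e : ℕ, min 1 ((Y / e) ^ 2) ≤ 4 * Y :=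
  Real.tsum_le_of_sum_range_le (fun _ => by positivity) (sum_range_min_one_div_sq_le hY)

noncomputable def kFreeDensity (k m : ℕ) : ℝ := ∑' e : ℕ, (μ e : ℝ) / (m.lcm (e ^ k) : ℕ)

lemma abs_kFreeDensity_le {k : ℕ} (hk : 2 ≤ k) (m : ℕ) : |kFreeDensity k m| ≤ 2 :=
  abs_tsum_moebius_div_le hk fun _ => Nat.dvd_lcm_right _ _

lemma min_one_le_min_one_sq {k : ℕ} (hk : 2 ≤ k) {t u : ℝ} (hu : 0 ≤ u) (ht : t ≤ u ^ k) :
    min 1 t ≤ min 1 (u ^ 2) := by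
  refine le_min (min_le_left _ _) ?_
  rcases le_total u 1 with hu1 | hu1
  · exact (min_le_right _ _).trans (ht.trans (pow_le_pow_of_le_one hu hu1 hk))
  · exact (min_le_left _ _).trans (one_le_pow₀ hu1)

lemma abs_card_kFree_multiples_sub_le {k : ℕ} (hk : 2 ≤ k) (m : ℕ) {x : ℝ} (hx : 1 ≤ x) :
    |(#{n ∈ Icc 1 ⌊x⌋₊ | m ∣ n ∧ ∀ p : ℕ, p.Prime → ¬ p ^ k ∣ n} : ℝ) - x * kFreeDensity k m|
      ≤ 4 * x ^ ((1 : ℝ) / k) := by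
  set Y := x ^ ((1 : ℝ) / k) with hYdef
  have hYk : Y ^ k = x := by
    rw [hYdef, one_div]; exact Real.rpow_inv_natCast_pow (by linarith) (by omega)
  have hY : 1 ≤ Y := Real.one_le_rpow hx (by positivity)
  set L : ℕ → ℕ := fun e => m.lcm (e ^ k)
  have hL : ∀ e, e ^ k ∣ L e := fun _ => Nat.dvd_lcm_right _ _
  have hsupp : ∀ e ∉ Icc 1 ⌊x⌋₊, (μ e : ℝ) * ⌊x / L e⌋₊ = 0 := by
    intro e he
    rcases Nat.eq_zero_or_pos e with rfl | he0
    · simp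
    have hNe : ⌊x⌋₊ < e := by simp at he; omega
    have hdiv : ⌊x⌋₊ / L e = 0 := by
      rcases eq_or_ne (L e) 0 with h0 | h0
      · rw [h0, Nat.div_zero]
      · exact Nat.div_eq_of_lt (hNe.trans_le ((Nat.le_self_pow (by omega) e).trans
          (Nat.le_of_dvd (Nat.pos_of_ne_zero h0) (hL e))))
    rw [Nat.floor_div_natCast, hdiv, Nat.cast_zero, mul_zero]
  have hcard : (#{n ∈ Icc 1 ⌊x⌋₊ | m ∣ n ∧ ∀ p : ℕ, p.Prime → ¬ p ^ k ∣ n} : ℝ)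
      = ∑' e, (μ e : ℝ) * ⌊x / L e⌋₊ := by
    rw [card_kFree_multiples (by omega), tsum_eq_sum hsupp]
    simp_rw [L, Nat.floor_div_natCast]
  have hterm : ∀ e : ℕ, ‖(μ e : ℝ) * (⌊x / L e⌋₊ - x / L e)‖ ≤ min 1 ((Y / e) ^ 2) := by
    intro e
    have hμ : |(μ e : ℝ)| ≤ 1 := by exact_mod_cast abs_moebius_le_one
    rw [Real.norm_eq_abs, abs_mul]
    calc |(μ e : ℝ)| * |(⌊x / L e⌋₊ : ℝ) - x / L e| ≤ 1 * min 1 (x / L e) :=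
          mul_le_mul hμ (abs_natFloor_sub_le_min (by positivity)) (abs_nonneg _) zero_le_one
      _ ≤ min 1 ((Y / e) ^ 2) := by
          rw [one_mul]
          refine min_one_le_min_one_sq hk (by positivity) ?_
          calc x / L e ≤ x / ((e ^ k : ℕ) : ℝ) :=
                div_natCast_le_div_natCast_of_dvd (hL e) (by linarith)
            _ = (Y / e) ^ k := by rw [div_pow, hYk, Nat.cast_pow]
  rw [hcard, kFreeDensity, ← tsum_mul_left,
    ← Summable.tsum_sub (summable_of_ne_finset_zero hsupp)
      ((summable_moebius_div hk hL).mul_left x)]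
  calc |∑' e, ((μ e : ℝ) * ⌊x / L e⌋₊ - x * ((μ e : ℝ) / L e))|
      = |∑' e, (μ e : ℝ) * (⌊x / L e⌋₊ - x / L e)| := by
        congr 1; exact tsum_congr fun e => by ring
    _ ≤ 4 * Y := tsum_of_norm_bounded (summable_min_one_div_sq hY).hasSum hterm
        |>.trans (tsum_min_one_div_sq_le hY)

lemma Nat.mul_lcm_eq_lcm_mul_lcm_gcd {g q : ℕ} (h : g ∣ q) (A : ℕ) :
    q * g.lcm A = q.lcm A * g.lcm (q.gcd A) := by
  rcases eq_or_ne q 0 with rfl | hq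
  · simp
  rcases eq_or_ne A 0 with rfl | hA
  · simp
  have hg : g ≠ 0 := ne_zero_of_dvd_ne_zero hq h
  have hgq := (Nat.factorization_le_iff_dvd hg hq).2 h
  refine Nat.eq_of_factorization_eq (by positivity) (by positivity) fun p => ?_
  have := hgq p
  simp only [Nat.factorization_mul hq (Nat.lcm_ne_zero hg hA),
    Nat.factorization_mul (Nat.lcm_ne_zero hq hA) (Nat.lcm_ne_zero hg (Nat.gcd_ne_zero_left hq)),
    Nat.factorization_lcm hg hA, Nat.factorization_lcm hq hA,
    Nat.factorization_lcm hg (Nat.gcd_ne_zero_left hq), Nat.factorization_gcd hq hA,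
    Finsupp.add_apply, Finsupp.sup_apply, Finsupp.inf_apply]
  omega

lemma div_lcm_mul_div_lcm_gcd {g q : ℕ} (hq : q ≠ 0) (hg : g ∣ q) (A : ℕ) (c : ℝ) :
    c / (q.lcm A : ℕ) * (q / g.lcm (q.gcd A) : ℕ) = c / (g.lcm A : ℕ) := by
  rcases eq_or_ne A 0 with rfl | hA
  · simp
  have hG : g.lcm (q.gcd A) ∣ q := Nat.lcm_dvd hg (Nat.gcd_dvd_left q A)
  have hid : (q : ℝ) * (g.lcm A : ℕ) = (q.lcm A : ℕ) * (g.lcm (q.gcd A) : ℕ) := by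
    exact_mod_cast Nat.mul_lcm_eq_lcm_mul_lcm_gcd hg A
  have hqA : ((q.lcm A : ℕ) : ℝ) ≠ 0 := by exact_mod_cast Nat.lcm_ne_zero hq hA
  have hgA : ((g.lcm A : ℕ) : ℝ) ≠ 0 := by
    exact_mod_cast Nat.lcm_ne_zero (ne_zero_of_dvd_ne_zero hq hg) hA
  have hG0 : ((g.lcm (q.gcd A) : ℕ) : ℝ) ≠ 0 := by exact_mod_cast ne_zero_of_dvd_ne_zero hq hG
  rw [Nat.cast_div hG hG0]
  field_simp
  linear_combination c * hid

lemma eta_eq_tsum (k q a : ℕ) :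
    eta k q a = ∑' d : ℕ, (μ d : ℝ) / (q.lcm (d ^ k) : ℕ) * if q.gcd (d ^ k) ∣ a then 1 else 0 := by
  rw [eta, tsum_pnat_eq_tsum_of_eq_zero (f := fun d : ℕ =>
    if q.gcd (d ^ k) ∣ a then (μ d : ℝ) / (q.lcm (d ^ k) : ℕ) else 0) (by simp)]
  exact tsum_congr fun d => by split_ifs <;> simp

lemma sum_mul_eta {k : ℕ} (hk : 2 ≤ k) (q : ℕ) (s : Finset ℕ) (w : ℕ → ℝ) :
    ∑ n ∈ s, w n * eta k q n
      = ∑' d : ℕ, (μ d : ℝ) / (q.lcm (d ^ k) : ℕ) * ∑ n ∈ s with q.gcd (d ^ k) ∣ n, w n := by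
  have hind : ∀ n d : ℕ, |if q.gcd (d ^ k) ∣ n then (1 : ℝ) else 0| ≤ 1 := by
    intro n d; split_ifs <;> simp
  simp_rw [eta_eq_tsum, ← tsum_mul_left]
  rw [← Summable.tsum_finsetSum fun n _ =>
    (summable_moebius_div_mul hk (fun _ => Nat.dvd_lcm_right _ _) (hind n)).mul_left (w n)]
  refine tsum_congr fun d => ?_
  rw [sum_filter, mul_sum]
  exact sum_congr rfl fun n _ => by split_ifs <;> ring

lemma sum_kFree_eta {k : ℕ} (hk : 2 ≤ k) (q N : ℕ) :
    ∑ n ∈ Icc 1 N, (if ∀ p : ℕ, p.Prime → ¬ p ^ k ∣ n then eta k q n else 0)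
      = ∑' d : ℕ, (μ d : ℝ) / (q.lcm (d ^ k) : ℕ) *
          #{n ∈ Icc 1 N | q.gcd (d ^ k) ∣ n ∧ ∀ p : ℕ, p.Prime → ¬ p ^ k ∣ n} := by
  have h := sum_mul_eta hk q (Icc 1 N) fun n => if ∀ p : ℕ, p.Prime → ¬ p ^ k ∣ n then 1 else 0
  simpa only [ite_mul, one_mul, zero_mul, sum_boole, filter_filter] using h

lemma sum_eta_of_dvd {k q g : ℕ} (hk : 2 ≤ k) (hq : q ≠ 0) (hg : g ∣ q) :
    ∑ a ∈ Icc 1 q with g ∣ a, eta k q a = kFreeDensity k g := by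
  have h := sum_mul_eta hk q {a ∈ Icc 1 q | g ∣ a} fun _ => 1
  simp only [one_mul, sum_const, filter_filter, card_filter_dvd_and_dvd, nsmul_eq_mul,
    mul_one] at h
  rw [h, kFreeDensity]
  exact tsum_congr fun e => div_lcm_mul_div_lcm_gcd hq hg (e ^ k) _

lemma sum_eta_sq {k q : ℕ} (hk : 2 ≤ k) (hq : q ≠ 0) :
    ∑ a ∈ Icc 1 q, eta k q a ^ 2
      = ∑' d : ℕ, (μ d : ℝ) / (q.lcm (d ^ k) : ℕ) * kFreeDensity k (q.gcd (d ^ k)) := by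
  simp_rw [sq, sum_mul_eta hk q (Icc 1 q) (eta k q),
    sum_eta_of_dvd hk hq (Nat.gcd_dvd_left _ _)]

/-- Uniformly for `1 ≤ q ≤ x`:
`∑_{n ≤ x, n k-free} η(q,n) = x ∑_{a=1}^q η(q,a)² + O_{k,ε}(x^{1/k+ε})`. -/
theorem statement18 (k : ℕ) (hk : 2 ≤ k) (ε : ℝ) (hε : 0 < ε) :
    ∃ C > (0 : ℝ), ∀ x : ℝ, ∀ q : ℕ, 1 ≤ q → (q : ℝ) ≤ x →
      |(∑ n ∈ Finset.Icc 1 ⌊x⌋₊,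
          if ∀ p : ℕ, p.Prime → ¬ p ^ k ∣ n then eta k q n else 0) -
        x * ∑ a ∈ Finset.Icc 1 q, (eta k q a) ^ 2| ≤ C * x ^ ((1 : ℝ) / k + ε) := by
  refine ⟨8, by norm_num, fun x q hq hqx => ?_⟩
  have hx : 1 ≤ x := le_trans (by exact_mod_cast hq) hqx
  have hL : ∀ d, d ^ k ∣ q.lcm (d ^ k) := fun _ => Nat.dvd_lcm_right _ _
  have hcard : ∀ d, |(#{n ∈ Icc 1 ⌊x⌋₊ | q.gcd (d ^ k) ∣ n ∧
      ∀ p : ℕ, p.Prime → ¬ p ^ k ∣ n} : ℝ)| ≤ ⌊x⌋₊ := fun d => by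
    rw [Nat.abs_cast, Nat.cast_le]
    exact (card_filter_le _ _).trans (by simp)
  rw [sum_kFree_eta hk, sum_eta_sq hk (by omega), ← tsum_mul_left,
    ← Summable.tsum_sub (summable_moebius_div_mul hk hL hcard)
      ((summable_moebius_div_mul hk hL fun _ => abs_kFreeDensity_le hk _).mul_left x)]
  calc _ = |∑' d : ℕ, (μ d : ℝ) / (q.lcm (d ^ k) : ℕ) *
          ((#{n ∈ Icc 1 ⌊x⌋₊ | q.gcd (d ^ k) ∣ n ∧ ∀ p : ℕ, p.Prime → ¬ p ^ k ∣ n} : ℝ) -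
            x * kFreeDensity k (q.gcd (d ^ k)))| := by
        congr 1; exact tsum_congr fun d => by ring
    _ ≤ 2 * (4 * x ^ ((1 : ℝ) / k)) :=
        abs_tsum_moebius_div_mul_le hk hL fun _ => abs_card_kFree_multiples_sub_le hk _ hx
    _ ≤ 8 * x ^ ((1 : ℝ) / k + ε) := by
        rw [← mul_assoc]
        gcongr
        · norm_num
        · linarith
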